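/- Let v(t) = w(t)e^{−σt} where w ∈ C^∞([0,∞)), 0 ≤ w ≤ 1, w ≡ 1 on [0,3/4], w ≡ 0 on [1,∞), and σ > 0, and for r ∈ (0,8) and n ∈ ℕ define g_r(t) = ∑_{k=0}^n (n choose k)(−1)^k 𝟙_{t > k r²} v(t − k r²). Then there is a constant C_n (independent of r) such that: |g_r(t)| ≤ C_n for 0 < t ≤ min(1 + n r², (1+n)r²); |g_r(t)| ≤ C_n r^{2n} for min(1 + n r², (1+n)r²) < t ≤ 1 + n r²; and g_r(t) = 0 for t > 1 + n r². -/

import Mathlib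

open Real Set Finset

lemma fd_key (h B : ℝ) (hh : 0 < h) (hB : 0 ≤ B) :
    ∀ (n : ℕ) (f : ℝ → ℝ) (a : ℝ), (n : ℝ) * h < a →
      ContDiffOn ℝ n f (Set.Ioi 0) →
      (∀ x ∈ Set.Icc (a - n * h) a, |iteratedDeriv n f x| ≤ B) →
      |∑ k ∈ Finset.range (n + 1), (n.choose k : ℝ) * (-1) ^ k * f (a - k * h)| ≤ B * h ^ n := by
  intro n
  induction n with
  | zero =>
    intro f a ha hf hbd
    simpa using hbd a ⟨by simp, le_refl a⟩
  | succ n IH =>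
    intro f a ha hf hbd
    have ha' : ((n : ℝ) + 1) * h < a := by push_cast at ha; linarith
    set S : ℝ → ℝ := fun x => ∑ k ∈ Finset.range (n + 1),
      (n.choose k : ℝ) * (-1) ^ k * f (x - k * h) with hS_def
    set S' : ℝ → ℝ := fun x => ∑ k ∈ Finset.range (n + 1),
      (n.choose k : ℝ) * (-1) ^ k * deriv f (x - k * h) with hS'_def
    -- Pascal-type identity
    have key_eq : ∑ k ∈ Finset.range (n + 1 + 1),
        ((n + 1).choose k : ℝ) * (-1) ^ k * f (a - k * h) = S a - S (a - h) := by
      rw [Finset.sum_range_succ' (fun k => ((n + 1).choose k : ℝ) * (-1) ^ k * f (a - k * h))]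
      have e1 : ∀ k ∈ Finset.range (n + 1),
          ((n + 1).choose (k + 1) : ℝ) * (-1) ^ (k + 1) * f (a - (k + 1 : ℕ) * h)
          = -((n.choose k : ℝ) * (-1) ^ k * f (a - h - k * h))
            + (n.choose (k + 1) : ℝ) * (-1) ^ (k + 1) * f (a - (k + 1 : ℕ) * h) := by
        intro k _
        have hp : ((n + 1).choose (k + 1) : ℝ) = (n.choose k : ℝ) + (n.choose (k + 1) : ℝ) := by
          exact_mod_cast congrArg (fun m : ℕ => (m : ℝ)) (Nat.choose_succ_succ' n k)
        have harg : a - (k + 1 : ℕ) * h = a - h - k * h := by push_cast; ring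
        rw [hp, harg]
        ring
      rw [Finset.sum_congr rfl e1, Finset.sum_add_distrib]
      have e2 : ∑ k ∈ Finset.range (n + 1),
          -((n.choose k : ℝ) * (-1) ^ k * f (a - h - k * h)) = -S (a - h) := by
        have hSh : S (a - h) = ∑ k ∈ Finset.range (n + 1),
            (n.choose k : ℝ) * (-1) ^ k * f (a - h - k * h) := rfl
        rw [hSh, ← Finset.sum_neg_distrib]
      have hSa : S a = ∑ k ∈ Finset.range (n + 1),
          (n.choose k : ℝ) * (-1) ^ k * f (a - k * h) := rfl
      have e3 : ∑ k ∈ Finset.range (n + 1),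
          (n.choose (k + 1) : ℝ) * (-1) ^ (k + 1) * f (a - (k + 1 : ℕ) * h)
          = S a - f a := by
        rw [Finset.sum_range_succ]
        simp only [Nat.choose_succ_self, Nat.cast_zero, zero_mul]
        rw [hSa,
          Finset.sum_range_succ' (fun k => (n.choose k : ℝ) * (-1) ^ k * f (a - k * h))]
        simp
      rw [e2, e3]
      simp
      ring
    rw [key_eq]
    have hmem : ∀ k, k ∈ Finset.range (n + 1) → ∀ x ∈ Set.Icc (a - h) a, 0 < x - k * h := by
      intro k hk x hx
      have hk' : (k : ℝ) ≤ n := by exact_mod_cast Nat.le_of_lt_succ (Finset.mem_range.mp hk)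
      have := hx.1
      nlinarith
    have hS : ∀ x ∈ Set.Icc (a - h) a, HasDerivWithinAt S (S' x) (Set.Icc (a - h) a) x := by
      intro x hx
      apply HasDerivAt.hasDerivWithinAt
      have : HasDerivAt (fun y => ∑ k ∈ Finset.range (n + 1),
          (n.choose k : ℝ) * (-1) ^ k * f (y - k * h))
          (∑ k ∈ Finset.range (n + 1), (n.choose k : ℝ) * (-1) ^ k * deriv f (x - k * h)) x := by
        apply HasDerivAt.fun_sum
        intro k hk
        have hpos := hmem k hk x hx
        have hdiff : DifferentiableAt ℝ f (x - k * h) :=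
          (hf.differentiableOn (by simp)).differentiableAt
            (isOpen_Ioi.mem_nhds hpos)
        have h1 := hdiff.hasDerivAt
        have h2 : HasDerivAt (fun y : ℝ => y - k * h) 1 x := (hasDerivAt_id x).sub_const _
        have h3 := h1.comp x h2
        simpa [mul_assoc] using h3.const_mul ((n.choose k : ℝ) * (-1) ^ k)
      exact this
    have hS'bd : ∀ x ∈ Set.Icc (a - h) a, ‖S' x‖ ≤ B * h ^ n := by
      intro x hx
      have hxlow : (n : ℝ) * h < x := by
        have := hx.1; push_cast at ha; linarith
      apply IH (deriv f) x hxlow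
      · exact hf.deriv_of_isOpen isOpen_Ioi (by exact_mod_cast le_refl (n + 1))
      · intro y hy
        rw [← iteratedDeriv_succ']
        refine hbd y ⟨?_, hy.2.trans hx.2⟩
        have := hy.1; have := hx.1; push_cast; linarith
    have hmv := Convex.norm_image_sub_le_of_norm_hasDerivWithin_le hS hS'bd (convex_Icc _ _)
      (x := a) (y := a - h) ⟨by linarith, le_refl a⟩ ⟨le_refl _, by linarith⟩
    have : ‖S (a - h) - S a‖ ≤ B * h ^ n * h := by
      have : ‖(a - h) - a‖ = h := by
        rw [show (a - h) - a = -h by ring, norm_neg, Real.norm_eq_abs, abs_of_pos hh]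
      rw [this] at hmv; exact hmv
    calc |S a - S (a - h)| = ‖S (a - h) - S a‖ := by rw [← norm_neg]; congr 1; ring
      _ ≤ B * h ^ n * h := this
      _ = B * h ^ (n + 1) := by ring
lemma within_eq_global (f : ℝ → ℝ) (m : ℕ) {x : ℝ} (hx : 0 < x) :
    iteratedDerivWithin m f (Set.Ici 0) x = iteratedDeriv m f x := by
  rw [← iteratedDerivWithin_univ, iteratedDerivWithin_eq_iteratedFDerivWithin,
    iteratedDerivWithin_eq_iteratedFDerivWithin]
  congr 1
  exact iteratedFDerivWithin_congr_set (Filter.eventuallyEq_univ.2 (Ici_mem_nhds hx)) m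

theorem stmt_10 (w : ℝ → ℝ) (σ : ℝ) (hσ : 0 < σ)
    (hw_smooth : ContDiffOn ℝ (⊤ : ℕ∞) w (Set.Ici 0))
    (hw01 : ∀ t ∈ Set.Ici (0 : ℝ), 0 ≤ w t ∧ w t ≤ 1)
    (hw1 : ∀ t ∈ Set.Icc (0 : ℝ) (3 / 4), w t = 1)
    (hw0 : ∀ t ∈ Set.Ici (1 : ℝ), w t = 0)
    (n : ℕ) :
    ∃ C : ℝ, 0 < C ∧ ∀ r : ℝ, 0 < r → r < 8 →
      let g : ℝ → ℝ := fun t =>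
        ∑ k ∈ Finset.range (n + 1),
          (n.choose k : ℝ) * (-1 : ℝ) ^ k *
            (if (k : ℝ) * r ^ 2 < t then
              w (t - (k : ℝ) * r ^ 2) * Real.exp (-σ * (t - (k : ℝ) * r ^ 2))
            else 0)
      (∀ t : ℝ, 0 < t → t ≤ min (1 + n * r ^ 2) ((1 + n) * r ^ 2) → |g t| ≤ C) ∧
      (∀ t : ℝ, min (1 + n * r ^ 2) ((1 + n) * r ^ 2) < t → t ≤ 1 + n * r ^ 2 →
        |g t| ≤ C * r ^ (2 * n)) ∧
      (∀ t : ℝ, 1 + n * r ^ 2 < t → g t = 0) := by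
  set v : ℝ → ℝ := fun u => w u * Real.exp (-σ * u) with hv_def
  have hv_smooth : ContDiffOn ℝ (⊤ : ℕ∞) v (Set.Ici 0) := by
    apply hw_smooth.mul
    exact (Real.contDiff_exp.comp ((contDiff_const (c := -σ)).mul contDiff_id)).contDiffOn
  -- bound for the n-th derivative on a compact interval
  obtain ⟨M, hM⟩ : ∃ M : ℝ, ∀ x ∈ Set.Icc (0 : ℝ) (1 + n * 64),
      ‖iteratedDerivWithin n v (Set.Ici 0) x‖ ≤ M := by
    apply (isCompact_Icc).exists_bound_of_continuousOn
    exact (hv_smooth.continuousOn_iteratedDerivWithin (by exact_mod_cast le_top) (uniqueDiffOn_Ici 0)).mono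
      (fun x hx => hx.1)
  set B : ℝ := max M 0 with hB_def
  have hB0 : 0 ≤ B := le_max_right _ _
  refine ⟨2 ^ n + B + 1, by positivity, ?_⟩
  intro r hr hr8 g
  have hr2 : 0 < r ^ 2 := by positivity
  have hr64 : r ^ 2 ≤ 64 := by nlinarith
  constructor
  · -- small t : trivial bound by 2^n
    intro t ht htle
    have hbd : ∀ k ∈ Finset.range (n + 1),
        |(n.choose k : ℝ) * (-1 : ℝ) ^ k *
          (if (k : ℝ) * r ^ 2 < t then
            w (t - (k : ℝ) * r ^ 2) * Real.exp (-σ * (t - (k : ℝ) * r ^ 2)) else 0)|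
          ≤ (n.choose k : ℝ) := by
      intro k _
      rw [abs_mul, abs_mul, abs_pow, abs_neg, abs_one, one_pow, mul_one,
        Nat.abs_cast]
      have : |(if (k : ℝ) * r ^ 2 < t then
          w (t - (k : ℝ) * r ^ 2) * Real.exp (-σ * (t - (k : ℝ) * r ^ 2)) else 0)| ≤ 1 := by
        split_ifs with hkt
        · have hu : (0 : ℝ) ≤ t - k * r ^ 2 := by linarith
          obtain ⟨hw0', hw1'⟩ := hw01 _ hu
          rw [abs_mul]
          have he : |Real.exp (-σ * (t - k * r ^ 2))| ≤ 1 := by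
            rw [abs_of_pos (Real.exp_pos _)]
            apply Real.exp_le_one_iff.mpr
            nlinarith
          have hwabs : |w (t - k * r ^ 2)| ≤ 1 := by rw [abs_of_nonneg hw0']; exact hw1'
          calc |w (t - k * r ^ 2)| * |Real.exp (-σ * (t - k * r ^ 2))|
              ≤ 1 * 1 := mul_le_mul hwabs he (abs_nonneg _) zero_le_one
            _ = 1 := by ring
        · simp
      calc (n.choose k : ℝ) * |_| ≤ (n.choose k : ℝ) * 1 :=
            mul_le_mul_of_nonneg_left this (by positivity)
        _ = _ := mul_one _
    calc |g t| ≤ ∑ k ∈ Finset.range (n + 1), |(n.choose k : ℝ) * (-1 : ℝ) ^ k *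
          (if (k : ℝ) * r ^ 2 < t then
            w (t - (k : ℝ) * r ^ 2) * Real.exp (-σ * (t - (k : ℝ) * r ^ 2)) else 0)| :=
        Finset.abs_sum_le_sum_abs _ _
      _ ≤ ∑ k ∈ Finset.range (n + 1), (n.choose k : ℝ) := Finset.sum_le_sum hbd
      _ = 2 ^ n := by rw [← Nat.cast_sum]; rw [Nat.sum_range_choose]; push_cast; ring
      _ ≤ 2 ^ n + B + 1 := by linarith
  constructor
  · -- middle region
    intro t hmin hle
    have ht2 : (1 + (n : ℝ)) * r ^ 2 < t := by
      rcases min_lt_iff.mp hmin with h1 | h2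
      · linarith
      · exact h2
    -- all indicators are true
    have hind : ∀ k ∈ Finset.range (n + 1), (k : ℝ) * r ^ 2 < t := by
      intro k hk
      have : (k : ℝ) ≤ n := by exact_mod_cast Nat.le_of_lt_succ (Finset.mem_range.mp hk)
      nlinarith
    have hg_eq : g t = ∑ k ∈ Finset.range (n + 1),
        (n.choose k : ℝ) * (-1 : ℝ) ^ k * v (t - (k : ℝ) * r ^ 2) := by
      apply Finset.sum_congr rfl
      intro k hk
      rw [if_pos (hind k hk)]
    rw [hg_eq]
    have hkey := fd_key (r ^ 2) B hr2 hB0 n v t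
      (by nlinarith) ((hv_smooth.of_le (by exact_mod_cast le_top)).mono Set.Ioi_subset_Ici_self)
      (by
        intro x hx
        have hx0 : 0 < x := by
          have := hx.1; nlinarith
        rw [← within_eq_global v n hx0]
        have hxT : x ∈ Set.Icc (0 : ℝ) (1 + n * 64) := by
          refine ⟨le_of_lt hx0, ?_⟩
          have := hx.2
          nlinarith
        calc |iteratedDerivWithin n v (Set.Ici 0) x| ≤ M := hM x hxT
          _ ≤ B := le_max_left _ _)
    calc |∑ k ∈ Finset.range (n + 1),
          (n.choose k : ℝ) * (-1 : ℝ) ^ k * v (t - (k : ℝ) * r ^ 2)| ≤ B * (r ^ 2) ^ n := hkey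
      _ = B * r ^ (2 * n) := by rw [← pow_mul]
      _ ≤ (2 ^ n + B + 1) * r ^ (2 * n) := by
          have h2n : (0:ℝ) < 2 ^ n := by positivity
          apply mul_le_mul_of_nonneg_right (by linarith) (by positivity)
  · -- large t : everything vanishes
    intro t ht
    apply Finset.sum_eq_zero
    intro k hk
    have hkn : (k : ℝ) ≤ n := by exact_mod_cast Nat.le_of_lt_succ (Finset.mem_range.mp hk)
    split_ifs with hkt
    · have h1 : (1 : ℝ) ≤ t - k * r ^ 2 := by nlinarith
      rw [hw0 _ h1, zero_mul, mul_zero]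
    · rw [mul_zero]
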